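/- Let N, N* ≥ 0 be integers, let 0 = p₀ < p₁ < ⋯ < p_{N*} be integers, and let g, h₁, h₂ > 0 and 0 < ρ₁ < ρ₂ be real numbers. Define for ξ ∈ ℝⁿ \ {0} the quantity c_K(ξ)² = (ρ₂−ρ₁) g |ξ|^{−2} det 𝒜₁(h₁ξ) det 𝒜₂(h₂ξ) / ( ρ₁ h₁ det 𝒜̃₁(h₁ξ) det 𝒜₂(h₂ξ) + ρ₂ h₂ det 𝒜̃₂(h₂ξ) det 𝒜₁(h₁ξ) ). Then, as |ξ| → ∞, c_K(ξ)² converges to the limit L = (ρ₂−ρ₁) g h₁ h₂ det A_{1,0} det A_{2,0} / ( ρ₁ h₂ det Ã_{1,0} det A_{2,0} + ρ₂ h₁ det Ã_{2,0} det A_{1,0} ), and L > 0. -/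

import Mathlib

/-- For a square matrix `A` of size `m`, `tilde A` is the `(m+1) × (m+1)` matrix with block
form `[[0, 𝟙ᵀ], [−𝟙, A]]`, where `𝟙 = (1,…,1)ᵀ`. -/
noncomputable def tilde {m : ℕ} (A : Matrix (Fin m) (Fin m) ℝ) :
    Matrix (Fin 1 ⊕ Fin m) (Fin 1 ⊕ Fin m) ℝ :=
  Matrix.fromBlocks 0 (Matrix.of fun _ _ => (1 : ℝ)) (Matrix.of fun _ _ => (-1 : ℝ)) A

/-- The matrix `A_{1,0} = (1/(2(i+j)+1))`. -/
noncomputable def matA10 (N : ℕ) : Matrix (Fin (N + 1)) (Fin (N + 1)) ℝ :=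
  Matrix.of fun i j => (1 : ℝ) / (2 * ((i : ℕ) + (j : ℕ)) + 1)

/-- The matrix `A_{1,1} = (4ij/(2(i+j)−1))`. -/
noncomputable def matA11 (N : ℕ) : Matrix (Fin (N + 1)) (Fin (N + 1)) ℝ :=
  Matrix.of fun i j => (4 * (i : ℕ) * (j : ℕ) : ℝ) / ((2 * ((i : ℕ) + (j : ℕ)) : ℝ) - 1)

/-- The matrix `A_{2,0} = (1/(pᵢ+pⱼ+1))`. -/
noncomputable def matA20 (M : ℕ) (p : Fin (M + 1) → ℕ) :
    Matrix (Fin (M + 1)) (Fin (M + 1)) ℝ :=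
  Matrix.of fun i j => (1 : ℝ) / ((p i : ℝ) + (p j : ℝ) + 1)

/-- The matrix `A_{2,1} = (pᵢpⱼ/(pᵢ+pⱼ−1))` (with the convention `0/0 = 0`). -/
noncomputable def matA21 (M : ℕ) (p : Fin (M + 1) → ℕ) :
    Matrix (Fin (M + 1)) (Fin (M + 1)) ℝ :=
  Matrix.of fun i j => ((p i : ℝ) * (p j : ℝ)) / ((p i : ℝ) + (p j : ℝ) - 1)

/-!
Both `A_{1,0}` and `A_{2,0}` are Gram matrices of monomials in `L²(0, 1)`:
`xᵀ A_{2,0} x = ∫₀¹ (∑ xᵢ t^{pᵢ})² dt`, and `A_{1,0}` is the case `pᵢ = 2i`. Hence they are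
positive definite, and by the Schur complement `det Ã = det A · 𝟙ᵀ A⁻¹ 𝟙 > 0`, which makes the
limit positive. For the limit, pull `u = |hξ|²` out of each matrix:
`det (u A₀ + A₁) = u^{M+1} det (A₀ + u⁻¹ A₁)` and
`det (tilde (u A₀ + A₁)) = u^M det (tilde (A₀ + u⁻¹ A₁))`.
These powers cancel against `|ξ|⁻²` in the quotient, which becomes a continuous function of
`u⁻¹ → 0`.
-/

open Filter Matrix Polynomial Topology MeasureTheory

theorem matA20_apply_eq_integral (M : ℕ) (p : Fin (M + 1) → ℕ) (i j : Fin (M + 1)) :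
    matA20 M p i j = ∫ t in (0 : ℝ)..1, t ^ (p i + p j) := by
  simp [matA20, integral_pow]

theorem dotProduct_matA20_mulVec (M : ℕ) (p : Fin (M + 1) → ℕ) (x : Fin (M + 1) → ℝ) :
    x ⬝ᵥ (matA20 M p *ᵥ x) = ∫ t in (0 : ℝ)..1, (∑ i, x i * t ^ p i) ^ 2 := by
  have hint : ∀ i j, IntervalIntegrable (fun t : ℝ => x i * x j * t ^ (p i + p j)) volume 0 1 :=
    fun i j => (by fun_prop : Continuous _).intervalIntegrable 0 1
  have hsq : ∀ t : ℝ, (∑ i, x i * t ^ p i) ^ 2 = ∑ i, ∑ j, x i * x j * t ^ (p i + p j) := by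
    intro t
    rw [sq, Finset.sum_mul_sum]
    simp only [pow_add]
    exact Finset.sum_congr rfl fun i _ => Finset.sum_congr rfl fun j _ => by ring
  simp only [hsq]
  rw [intervalIntegral.integral_finsetSum fun i _ => ?_]
  · simp only [dotProduct, mulVec, Finset.mul_sum, matA20_apply_eq_integral]
    refine Finset.sum_congr rfl fun i _ => ?_
    rw [intervalIntegral.integral_finsetSum fun j _ => hint i j]
    refine Finset.sum_congr rfl fun j _ => ?_
    rw [intervalIntegral.integral_const_mul]
    ring
  · exact (by fun_prop : Continuous _).intervalIntegrable 0 1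

theorem sum_C_mul_X_pow_ne_zero {R ι : Type*} [Semiring R] [Fintype ι] {p : ι → ℕ}
    (hp : Function.Injective p) {x : ι → R} (hx : x ≠ 0) : ∑ i, C (x i) * X ^ p i ≠ 0 := by
  obtain ⟨i, hi⟩ := Function.ne_iff.1 hx
  refine fun h => hi ?_
  have := congrArg (coeff · (p i)) h
  simp only [finsetSum_coeff, coeff_C_mul, coeff_X_pow, coeff_zero] at this
  rw [Finset.sum_eq_single i (fun j _ hj => by simp [hp.ne hj.symm]) (by simp)] at this
  simpa using this

theorem integral_sq_eval_pos {Q : ℝ[X]} (hQ : Q ≠ 0) {a b : ℝ} (hab : a < b) :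
    0 < ∫ t in a..b, Q.eval t ^ 2 := by
  obtain ⟨c, hc, hroot⟩ := (Set.Icc_infinite hab).exists_notMem_finset Q.roots.toFinset
  refine intervalIntegral.integral_pos hab (by fun_prop) (fun t _ => sq_nonneg _)
    ⟨c, hc, sq_pos_of_ne_zero ?_⟩
  simpa [hQ] using hroot

theorem matA20_posDef (M : ℕ) {p : Fin (M + 1) → ℕ} (hp : Function.Injective p) :
    (matA20 M p).PosDef := by
  refine posDef_iff_dotProduct_mulVec.2 ⟨?_, fun x hx => ?_⟩
  · ext i j
    simp only [matA20, conjTranspose_apply, of_apply, star_trivial, add_comm]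
  · rw [star_trivial, dotProduct_matA20_mulVec]
    simpa [eval_finsetSum] using integral_sq_eval_pos (sum_C_mul_X_pow_ne_zero hp hx) zero_lt_one

theorem matA10_eq_matA20 (N : ℕ) : matA10 N = matA20 N fun i => 2 * i := by
  ext i j
  simp only [matA10, matA20, of_apply]
  push_cast
  ring_nf

theorem matA10_posDef (N : ℕ) : (matA10 N).PosDef :=
  matA10_eq_matA20 N ▸ matA20_posDef N fun i j hij => Fin.ext (by omega)

theorem det_tilde_eq_det_mul_sum_inv {m : ℕ} {A : Matrix (Fin m) (Fin m) ℝ} (hA : IsUnit A.det) :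
    (tilde A).det = A.det * ∑ i, ∑ j, A⁻¹ i j := by
  have := A.invertibleOfIsUnitDet hA
  rw [tilde, det_fromBlocks₂₂, det_fin_one]
  simp [Matrix.mul_apply, invOf_eq_nonsing_inv, Finset.sum_comm (γ := Fin m)]

theorem det_tilde_pos {m : ℕ} {A : Matrix (Fin (m + 1)) (Fin (m + 1)) ℝ} (hA : A.PosDef) :
    0 < (tilde A).det := by
  rw [det_tilde_eq_det_mul_sum_inv hA.det_pos.ne'.isUnit]
  have hone : (fun _ => 1 : Fin (m + 1) → ℝ) ≠ 0 := Function.ne_iff.2 ⟨0, one_ne_zero⟩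
  have := hA.inv.dotProduct_mulVec_pos hone
  simp only [star_trivial, dotProduct, mulVec, one_mul, mul_one] at this
  exact mul_pos hA.det_pos (by simpa using this)

theorem det_tilde_smul {m : ℕ} {u : ℝ} (hu : u ≠ 0) (A : Matrix (Fin (m + 1)) (Fin (m + 1)) ℝ) :
    (tilde (u • A)).det = u ^ m * (tilde A).det := by
  -- conjugating by `diag(1, u, …, u)` and `diag(u⁻¹, 1, …, 1)` scales the `A` block by `u`
  have hconj : tilde (u • A) = diagonal (Sum.elim (fun _ => 1) fun _ => u) * tilde A *
      diagonal (Sum.elim (fun _ => u⁻¹) fun _ => 1) := by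
    ext (i | i) (j | j) <;> simp [tilde, mul_diagonal, diagonal_mul, hu]
  rw [hconj, det_mul, det_mul, det_diagonal, det_diagonal]
  simp only [Fintype.prod_sum_type, Finset.univ_unique, Sum.elim_inl, Sum.elim_inr,
    Finset.prod_const, Finset.card_univ, Fintype.card_fin, Finset.card_singleton, pow_one, one_pow,
    one_mul, mul_one]
  field_simp
  ring

theorem continuous_tilde {m : ℕ} : Continuous (tilde : Matrix (Fin m) (Fin m) ℝ → _) :=
  continuous_const.matrix_fromBlocks continuous_const continuous_const continuous_id

theorem det_smul_add {ι : Type*} [Fintype ι] [DecidableEq ι] {u : ℝ} (hu : u ≠ 0)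
    (A B : Matrix ι ι ℝ) : (u • A + B).det = u ^ Fintype.card ι * (A + u⁻¹ • B).det := by
  rw [← det_smul, smul_add, smul_smul, mul_inv_cancel₀ hu, one_smul]

theorem det_tilde_smul_add {m : ℕ} {u : ℝ} (hu : u ≠ 0)
    (A B : Matrix (Fin (m + 1)) (Fin (m + 1)) ℝ) :
    (tilde (u • A + B)).det = u ^ m * (tilde (A + u⁻¹ • B)).det := by
  rw [← det_tilde_smul hu, smul_add, smul_smul, mul_inv_cancel₀ hu, one_smul]

theorem tendsto_add_inv_sq_mul_smul_atTop {E : Type*} [AddCommGroup E] [Module ℝ E]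
    [TopologicalSpace E] [ContinuousAdd E] [ContinuousSMul ℝ E] {h : ℝ} (hh : h ≠ 0) (a b : E) :
    Tendsto (fun s : ℝ => a + ((h * s) ^ 2)⁻¹ • b) atTop (𝓝 a) := by
  have hsq : Tendsto (fun s : ℝ => (h * s) ^ 2) atTop atTop := by
    simpa only [mul_pow] using
      (tendsto_pow_atTop two_ne_zero).const_mul_atTop (sq_pos_of_ne_zero hh)
  simpa using tendsto_const_nhds.add (((tendsto_inv_atTop_zero (𝕜 := ℝ)).comp hsq).smul_const b)

theorem tendsto_det_ratio_atTop {m k : ℕ} (A₀ A₁ : Matrix (Fin (m + 1)) (Fin (m + 1)) ℝ)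
    (B₀ B₁ : Matrix (Fin (k + 1)) (Fin (k + 1)) ℝ) {c ρ₁ ρ₂ h₁ h₂ : ℝ} (hh₁ : h₁ ≠ 0)
    (hh₂ : h₂ ≠ 0)
    (hden : ρ₁ * h₂ * (tilde A₀).det * B₀.det + ρ₂ * h₁ * (tilde B₀).det * A₀.det ≠ 0) :
    Tendsto (fun s : ℝ =>
        c * (s ^ 2)⁻¹ * ((h₁ * s) ^ 2 • A₀ + A₁).det * ((h₂ * s) ^ 2 • B₀ + B₁).det
          / (ρ₁ * h₁ * (tilde ((h₁ * s) ^ 2 • A₀ + A₁)).det * ((h₂ * s) ^ 2 • B₀ + B₁).det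
            + ρ₂ * h₂ * (tilde ((h₂ * s) ^ 2 • B₀ + B₁)).det * ((h₁ * s) ^ 2 • A₀ + A₁).det))
      atTop (𝓝 (c * h₁ * h₂ * A₀.det * B₀.det
        / (ρ₁ * h₂ * (tilde A₀).det * B₀.det + ρ₂ * h₁ * (tilde B₀).det * A₀.det))) := by
  have hdet {l : ℕ} {h : ℝ} (hh : h ≠ 0) (A B : Matrix (Fin (l + 1)) (Fin (l + 1)) ℝ) :=
    (continuous_id.matrix_det.tendsto A).comp (tendsto_add_inv_sq_mul_smul_atTop hh A B)
  have hdet_tilde {l : ℕ} {h : ℝ} (hh : h ≠ 0) (A B : Matrix (Fin (l + 1)) (Fin (l + 1)) ℝ) :=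
    (continuous_tilde.matrix_det.tendsto A).comp (tendsto_add_inv_sq_mul_smul_atTop hh A B)
  have hG := (((tendsto_const_nhds (x := c * h₁ * h₂)).mul (hdet hh₁ A₀ A₁)).mul
      (hdet hh₂ B₀ B₁)).div
    ((((tendsto_const_nhds (x := ρ₁ * h₂)).mul (hdet_tilde hh₁ A₀ A₁)).mul (hdet hh₂ B₀ B₁)).add
      (((tendsto_const_nhds (x := ρ₂ * h₁)).mul (hdet_tilde hh₂ B₀ B₁)).mul (hdet hh₁ A₀ A₁)))
    hden
  refine hG.congr' ?_
  filter_upwards [eventually_ne_atTop 0] with s hs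
  have hu₁ : (h₁ * s) ^ 2 ≠ 0 := by positivity
  have hu₂ : (h₂ * s) ^ 2 ≠ 0 := by positivity
  simp only [Pi.div_apply, Function.comp_apply, id, det_smul_add hu₁, det_smul_add hu₂,
    det_tilde_smul_add hu₁, det_tilde_smul_add hu₂, Fintype.card_fin]
  have hK : s ^ 2 * h₁ * h₂ * ((h₁ * s) ^ 2) ^ m * ((h₂ * s) ^ 2) ^ k ≠ 0 := by positivity
  rw [← mul_div_mul_left _ _ hK]
  congr 1
  · field_simp
    ring
  · ring

theorem stmt_8_general (n N Nstar : ℕ) (p : Fin (Nstar + 1) → ℕ)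
    (hp : StrictMono p)
    (g h₁ h₂ ρ₁ ρ₂ : ℝ) (hg : 0 < g) (hh₁ : 0 < h₁) (hh₂ : 0 < h₂)
    (hρ₁ : 0 < ρ₁) (hρ : ρ₁ < ρ₂) :
    Filter.Tendsto
      (fun ξ : EuclideanSpace ℝ (Fin n) =>
        (ρ₂ - ρ₁) * g * (‖ξ‖ ^ 2)⁻¹
          * (‖(h₁ • ξ : EuclideanSpace ℝ (Fin n))‖ ^ 2 • matA10 N + matA11 N).det
          * (‖(h₂ • ξ : EuclideanSpace ℝ (Fin n))‖ ^ 2 • matA20 Nstar p + matA21 Nstar p).det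
          / (ρ₁ * h₁
              * (tilde (‖(h₁ • ξ : EuclideanSpace ℝ (Fin n))‖ ^ 2 • matA10 N + matA11 N)).det
              * (‖(h₂ • ξ : EuclideanSpace ℝ (Fin n))‖ ^ 2 • matA20 Nstar p
                  + matA21 Nstar p).det
            + ρ₂ * h₂
              * (tilde (‖(h₂ • ξ : EuclideanSpace ℝ (Fin n))‖ ^ 2 • matA20 Nstar p
                  + matA21 Nstar p)).det
              * (‖(h₁ • ξ : EuclideanSpace ℝ (Fin n))‖ ^ 2 • matA10 N + matA11 N).det))
      (Filter.comap (fun ξ : EuclideanSpace ℝ (Fin n) => ‖ξ‖) Filter.atTop)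
      (nhds ((ρ₂ - ρ₁) * g * h₁ * h₂ * (matA10 N).det * (matA20 Nstar p).det
        / (ρ₁ * h₂ * (tilde (matA10 N)).det * (matA20 Nstar p).det
          + ρ₂ * h₁ * (tilde (matA20 Nstar p)).det * (matA10 N).det)))
    ∧ 0 < (ρ₂ - ρ₁) * g * h₁ * h₂ * (matA10 N).det * (matA20 Nstar p).det
        / (ρ₁ * h₂ * (tilde (matA10 N)).det * (matA20 Nstar p).det
          + ρ₂ * h₁ * (tilde (matA20 Nstar p)).det * (matA10 N).det) := by
  have hA := matA10_posDef N
  have hB := matA20_posDef Nstar hp.injective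
  have hA' := det_tilde_pos hA
  have hB' := det_tilde_pos hB
  have hA₀ := hA.det_pos
  have hB₀ := hB.det_pos
  have hρ₂ := hρ₁.trans hρ
  have hden : 0 < ρ₁ * h₂ * (tilde (matA10 N)).det * (matA20 Nstar p).det
      + ρ₂ * h₁ * (tilde (matA20 Nstar p)).det * (matA10 N).det := by positivity
  refine ⟨?_, div_pos (by have := sub_pos.2 hρ; positivity) hden⟩
  simp only [norm_smul, Real.norm_of_nonneg hh₁.le, Real.norm_of_nonneg hh₂.le]
  exact (tendsto_det_ratio_atTop _ _ _ _ hh₁.ne' hh₂.ne' hden.ne').comp tendsto_comap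

/-- In the deep water limit `|ξ| → ∞`, the squared phase speed of the linearized Kakinuma model
converges to a positive limit. -/
theorem stmt_8 (n N Nstar : ℕ) (hn : 1 ≤ n) (p : Fin (Nstar + 1) → ℕ)
    (hp0 : p 0 = 0) (hp : StrictMono p)
    (g h₁ h₂ ρ₁ ρ₂ : ℝ) (hg : 0 < g) (hh₁ : 0 < h₁) (hh₂ : 0 < h₂)
    (hρ₁ : 0 < ρ₁) (hρ : ρ₁ < ρ₂) :
    Filter.Tendsto
      (fun ξ : EuclideanSpace ℝ (Fin n) =>
        (ρ₂ - ρ₁) * g * (‖ξ‖ ^ 2)⁻¹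
          * (‖(h₁ • ξ : EuclideanSpace ℝ (Fin n))‖ ^ 2 • matA10 N + matA11 N).det
          * (‖(h₂ • ξ : EuclideanSpace ℝ (Fin n))‖ ^ 2 • matA20 Nstar p + matA21 Nstar p).det
          / (ρ₁ * h₁
              * (tilde (‖(h₁ • ξ : EuclideanSpace ℝ (Fin n))‖ ^ 2 • matA10 N + matA11 N)).det
              * (‖(h₂ • ξ : EuclideanSpace ℝ (Fin n))‖ ^ 2 • matA20 Nstar p
                  + matA21 Nstar p).det
            + ρ₂ * h₂
              * (tilde (‖(h₂ • ξ : EuclideanSpace ℝ (Fin n))‖ ^ 2 • matA20 Nstar p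
                  + matA21 Nstar p)).det
              * (‖(h₁ • ξ : EuclideanSpace ℝ (Fin n))‖ ^ 2 • matA10 N + matA11 N).det))
      (Filter.comap (fun ξ : EuclideanSpace ℝ (Fin n) => ‖ξ‖) Filter.atTop)
      (nhds ((ρ₂ - ρ₁) * g * h₁ * h₂ * (matA10 N).det * (matA20 Nstar p).det
        / (ρ₁ * h₂ * (tilde (matA10 N)).det * (matA20 Nstar p).det
          + ρ₂ * h₁ * (tilde (matA20 Nstar p)).det * (matA10 N).det)))
    ∧ 0 < (ρ₂ - ρ₁) * g * h₁ * h₂ * (matA10 N).det * (matA20 Nstar p).det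
        / (ρ₁ * h₂ * (tilde (matA10 N)).det * (matA20 Nstar p).det
          + ρ₂ * h₁ * (tilde (matA20 Nstar p)).det * (matA10 N).det) :=
  stmt_8_general n N Nstar p hp g h₁ h₂ ρ₁ ρ₂ hg hh₁ hh₂ hρ₁ hρ
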